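/- arXiv:1908.05689 — 3 statements merged into one kernel-verified Lean document; each statement's English description precedes it below -/
import Mathlib

section
/- Let y = (y_α)_{α ∈ ℕⁿ_{2d}} be a truncated multi-sequence with y₀ = 1 whose moment matrix M_d[y] is positive semidefinite of rank 1. Then, setting u = (y_{e₁},…,y_{eₙ}) ∈ ℝⁿ, one has M_d[y] = [u]_d ([u]_d)ᵀ and y_α = u^α for every α ∈ ℕⁿ_{2d}; that is, y = [u]_{2d}. -/
open MvPolynomial Finset

/-- The set `ℕⁿ_d` of multi-indices `α ∈ ℕⁿ` with `|α| = α₁ + ⋯ + αₙ ≤ d`. -/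
abbrev MIdx (n d : ℕ) : Type := {α : Fin n →₀ ℕ // ∑ i, α i ≤ d}

noncomputable instance MIdx.fintype (n d : ℕ) : Fintype (MIdx n d) := by
  have hfin : {f : Fin n → ℕ | ∑ i, f i ≤ d}.Finite := by
    apply (Set.finite_Icc (0 : Fin n → ℕ) (fun _ => d)).subset
    intro f hf
    refine Set.mem_Icc.mpr ⟨fun i => Nat.zero_le _, fun i => ?_⟩
    exact le_trans (Finset.single_le_sum (fun j _ => Nat.zero_le (f j)) (Finset.mem_univ i)) hf
  have h2 : {α : Fin n →₀ ℕ | ∑ i, α i ≤ d}.Finite :=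
    Set.Finite.preimage (Set.injOn_of_injective (DFunLike.coe_injective (F := Fin n →₀ ℕ))) hfin
  exact h2.fintype

/-- The moment matrix `M_d[y]` of a truncated multi-sequence `y` of degree `2d`,
indexed by `α, β ∈ ℕⁿ_d`, with entries `y_{α+β}`. -/
noncomputable def momMat {n : ℕ} (d : ℕ) (y : MIdx n (2 * d) → ℝ) :
    Matrix (MIdx n d) (MIdx n d) ℝ := fun α β =>
  y ⟨α.1 + β.1, by
    have hα := α.2; have hβ := β.2
    have h : ∑ i, (α.1 + β.1) i = (∑ i, α.1 i) + ∑ i, β.1 i := by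
      simp [Finsupp.add_apply, Finset.sum_add_distrib]
    omega⟩

/-- The localizing matrix `L_p^{(d)}[y]` of a polynomial `p` of degree ≤ 2d at a tms `y`
of degree `2d`, indexed by `α, β ∈ ℕⁿ_t` with `t = d - ⌈deg(p)/2⌉`, with entries
`Σ_γ p_γ y_{α+β+γ}`. -/
noncomputable def locMat {n : ℕ} (d : ℕ) (p : MvPolynomial (Fin n) ℝ)
    (hp : p.totalDegree ≤ 2 * d) (y : MIdx n (2 * d) → ℝ) :
    Matrix (MIdx n (d - (p.totalDegree + 1) / 2))
      (MIdx n (d - (p.totalDegree + 1) / 2)) ℝ := fun α β =>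
  ∑ γ ∈ p.support.attach, p.coeff γ.1 *
    y ⟨α.1 + β.1 + γ.1, by
      have hα := α.2; have hβ := β.2
      have hγ : ∑ i, γ.1 i ≤ p.totalDegree := by
        have h1 := MvPolynomial.le_totalDegree γ.2
        have h2 : (γ.1.sum fun _ e => e) = ∑ i, γ.1 i :=
          Finsupp.sum_fintype _ _ (fun _ => rfl)
        omega
      have h : ∑ i, (α.1 + β.1 + γ.1) i = ((∑ i, α.1 i) + ∑ i, β.1 i) + ∑ i, γ.1 i := by
        simp [Finsupp.add_apply, Finset.sum_add_distrib]
      omega⟩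

/-- The Riesz functional `⟨f, y⟩ = Σ_{α ∈ ℕⁿ_{2d}} f_α y_α`. -/
noncomputable def riesz {n : ℕ} (d : ℕ) (f : MvPolynomial (Fin n) ℝ)
    (y : MIdx n (2 * d) → ℝ) : ℝ :=
  ∑ α : MIdx n (2 * d), f.coeff α.1 * y α

/-- The Euclidean norm of a truncated multi-sequence. -/
noncomputable def tmsNorm {n d : ℕ} (y : MIdx n d → ℝ) : ℝ :=
  Real.sqrt (∑ α, (y α) ^ 2)

/-- The vector of monomials `[x]_d = (x^α)_{α ∈ ℕⁿ_d}` evaluated at `x`. -/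
noncomputable def monVec {n : ℕ} (d : ℕ) (x : Fin n → ℝ) : MIdx n d → ℝ :=
  fun α => ∏ i, x i ^ α.1 i

/-- The coefficient vector `vec(p) ∈ ℝ^{ℕⁿ_{2d}}` of a polynomial `p ∈ ℝ[x]_{2d}`. -/
noncomputable def vecPoly {n : ℕ} (d : ℕ) (p : MvPolynomial (Fin n) ℝ) :
    MIdx n (2 * d) → ℝ := fun α => p.coeff α.1

/-- `σ` is a sum of squares of polynomials of degree at most `k`. -/
def IsSOSDeg {n : ℕ} (k : ℕ) (σ : MvPolynomial (Fin n) ℝ) : Prop :=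
  ∃ (r : ℕ) (s : Fin r → MvPolynomial (Fin n) ℝ),
    (∀ j, (s j).totalDegree ≤ k) ∧ σ = ∑ j, (s j) ^ 2

/-- Membership in the truncated quadratic module `Q(g)_{2d}`. -/
def memQ {n m : ℕ} (d : ℕ) (g : Fin m → MvPolynomial (Fin n) ℝ)
    (q : MvPolynomial (Fin n) ℝ) : Prop :=
  ∃ (σ₀ : MvPolynomial (Fin n) ℝ) (σ : Fin m → MvPolynomial (Fin n) ℝ),
    IsSOSDeg d σ₀ ∧ (∀ i, IsSOSDeg (d - ((g i).totalDegree + 1) / 2) (σ i)) ∧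
    q = σ₀ + ∑ i, g i * σ i

/-- If `y` is a tms of degree `2d` with `y₀ = 1` whose moment matrix
`M_d[y]` is positive semidefinite of rank 1, then with `u = (y_{e₁},…,y_{eₙ})` one has
`M_d[y] = [u]_d([u]_d)ᵀ` and `y_α = u^α` for every `α ∈ ℕⁿ_{2d}`, i.e. `y = [u]_{2d}`. -/
theorem stmt5 (n d : ℕ) (hd : 1 ≤ d) (y : MIdx n (2 * d) → ℝ)
    (hy0 : y ⟨0, by simp⟩ = 1)
    (hpsd : (momMat d y).PosSemidef) (hrank : (momMat d y).rank = 1)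
    (u : Fin n → ℝ)
    (hu : ∀ i : Fin n,
      u i = y ⟨Finsupp.single i 1, by simp [Finsupp.single_apply]; omega⟩) :
    momMat d y = Matrix.vecMulVec (monVec d u) (monVec d u) ∧
    ∀ α : MIdx n (2 * d), y α = ∏ i, u i ^ α.1 i := by
  classical
  -- basic sum lemmas
  have hsum : ∀ a b : Fin n →₀ ℕ, ∑ i, (a + b) i = (∑ i, a i) + ∑ i, b i := by
    intro a b; simp [Finsupp.add_apply, Finset.sum_add_distrib]
  have hsing : ∀ i : Fin n, ∑ j, (Finsupp.single i 1 : Fin n →₀ ℕ) j = 1 := by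
    intro i; simp [Finsupp.single_apply]
  have hpadd : ∀ b c : Fin n →₀ ℕ,
      (∏ j, u j ^ (b + c) j) = (∏ j, u j ^ b j) * ∏ j, u j ^ c j := by
    intro b c; simp [pow_add, Finset.prod_mul_distrib]
  have hpsing : ∀ i : Fin n, (∏ j, u j ^ (Finsupp.single i 1 : Fin n →₀ ℕ) j) = u i := by
    intro i; simp [Finsupp.single_apply, pow_ite]
  have h0d : ∑ i, (0 : Fin n →₀ ℕ) i ≤ d := by simp
  have h02 : ∑ i, (0 : Fin n →₀ ℕ) i ≤ 2 * d := by simp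
  set o : MIdx n d := ⟨0, h0d⟩ with ho
  set M := momMat d y with hMdef
  have hle : ∀ α β : MIdx n d, ∑ i, (α.1 + β.1) i ≤ 2 * d := by
    intro α β; have hα := α.2; have hβ := β.2; rw [hsum]; omega
  have hMval : ∀ (α β : MIdx n d) (h : ∑ i, (α.1 + β.1) i ≤ 2 * d),
      M α β = y ⟨α.1 + β.1, h⟩ := by
    intro α β h; rfl
  have hMoo : M o o = 1 := by
    rw [hMval o o (hle o o)]
    rw [show (⟨o.1 + o.1, hle o o⟩ : MIdx n (2 * d)) = ⟨0, h02⟩ from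
      Subtype.ext (by simp [ho])]
    exact hy0
  -- columns lie in the range of mulVecLin
  have hcol : ∀ β : MIdx n d, (fun α => M α β) ∈ LinearMap.range M.mulVecLin := by
    intro β
    exact ⟨Pi.single β 1, by ext α; simp [Matrix.mulVecLin_apply, Matrix.mulVec_single]⟩
  have hv0 : (⟨fun α => M α o, hcol o⟩ : LinearMap.range M.mulVecLin) ≠ 0 := by
    intro h
    apply (one_ne_zero : (1 : ℝ) ≠ 0)
    rw [← hMoo]
    exact congrFun (congrArg Subtype.val h) o
  have hrk : Module.finrank ℝ (LinearMap.range M.mulVecLin) = 1 := hrank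
  have hdep := (finrank_eq_one_iff_of_nonzero' _ hv0).mp hrk
  have hsymm : ∀ α β : MIdx n d, M α β = M β α := by
    intro α β
    rw [hMval α β (hle α β), hMval β α (hle β α)]
    exact congrArg y (Subtype.ext (add_comm _ _))
  have hfactor : ∀ α β : MIdx n d, M α β = M α o * M β o := by
    intro α β
    obtain ⟨c, hc⟩ := hdep ⟨fun a => M a β, hcol β⟩
    have hc' : ∀ a, c * M a o = M a β := fun a => congrFun (congrArg Subtype.val hc) a
    have h1 := hc' α
    have h2 := hc' o
    rw [hMoo, mul_one] at h2
    rw [← h1, h2, hsymm o β]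
    exact mul_comm _ _
  have hled : ∀ α : MIdx n d, ∑ i, α.1 i ≤ 2 * d := fun α => le_trans α.2 (by omega)
  have hzval : ∀ α : MIdx n d, M α o = y ⟨α.1, hled α⟩ := by
    intro α
    rw [hMval α o (hle α o)]
    exact congrArg y (Subtype.ext (by simp [ho]))
  -- the entries of the first column are monomials in u
  have hzp : ∀ m : ℕ, ∀ α : MIdx n d, ∑ i, α.1 i ≤ m → M α o = ∏ i, u i ^ α.1 i := by
    intro m
    induction m with
    | zero =>
      intro α h
      have h0 : ∀ i, α.1 i = 0 :=
        fun i => (Finset.sum_eq_zero_iff.mp (Nat.le_zero.mp h)) i (Finset.mem_univ i)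
      have hα : α = o := Subtype.ext (Finsupp.ext fun i => by simp [ho, h0 i])
      rw [hα, hMoo]
      simp [ho]
    | succ k ih =>
      intro α h
      by_cases hcase : ∑ i, α.1 i ≤ k
      · exact ih α hcase
      · have hex : ∃ i, α.1 i ≠ 0 := by
          by_contra hcon
          push_neg at hcon
          have h0 : ∑ i, α.1 i = 0 := Finset.sum_eq_zero fun i _ => hcon i
          omega
        obtain ⟨i, hi⟩ := hex
        have hsle : Finsupp.single i 1 ≤ α.1 := Finsupp.single_le_iff.mpr (by omega)
        set a' := α.1 - Finsupp.single i 1 with ha'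
        have hrec : Finsupp.single i 1 + a' = α.1 := add_tsub_cancel_of_le hsle
        have hs2 : ∑ j, α.1 j = 1 + ∑ j, a' j := by rw [← hrec, hsum, hsing]
        have ha'd : ∑ j, a' j ≤ d := by have := α.2; omega
        have hsd : ∑ j, (Finsupp.single i 1 : Fin n →₀ ℕ) j ≤ d := by rw [hsing]; omega
        have key : M α o = M ⟨Finsupp.single i 1, hsd⟩ ⟨a', ha'd⟩ := by
          rw [hzval α, hMval ⟨Finsupp.single i 1, hsd⟩ ⟨a', ha'd⟩ (hle _ _)]
          exact congrArg y (Subtype.ext hrec.symm)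
        have hui : M ⟨Finsupp.single i 1, hsd⟩ o = u i := by
          rw [hzval]
          exact (hu i).symm
        rw [key, hfactor, hui, ih ⟨a', ha'd⟩ (show ∑ j, a' j ≤ k by omega), ← hrec, hpadd, hpsing]
  -- splitting a multi-index of degree ≤ 2d into two halves
  have hsplit : ∀ (m : ℕ) (γ : Fin n →₀ ℕ), m ≤ ∑ i, γ i →
      ∃ a b : Fin n →₀ ℕ, a + b = γ ∧ ∑ i, a i = m := by
    intro m
    induction m with
    | zero => intro γ _; exact ⟨0, γ, zero_add γ, by simp⟩
    | succ k ih =>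
      intro γ hm
      obtain ⟨a, b, hab, hsa⟩ := ih γ (by omega)
      have hsab := hsum a b
      rw [hab] at hsab
      have hex : ∃ i, b i ≠ 0 := by
        by_contra hcon
        push_neg at hcon
        have h0 : ∑ i, b i = 0 := Finset.sum_eq_zero fun i _ => hcon i
        omega
      obtain ⟨i, hi⟩ := hex
      refine ⟨a + Finsupp.single i 1, b - Finsupp.single i 1, ?_, ?_⟩
      · rw [add_assoc, add_tsub_cancel_of_le (Finsupp.single_le_iff.mpr (by omega)), hab]
      · rw [hsum, hsa, hsing]
  -- the main pointwise identity
  have hfin : ∀ α : MIdx n (2 * d), y α = ∏ i, u i ^ α.1 i := by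
    intro α
    obtain ⟨a, b, hab, hsa⟩ := hsplit (min d (∑ i, α.1 i)) α.1 (min_le_right _ _)
    have hsab := hsum a b
    rw [hab] at hsab
    have hα2 := α.2
    have had : ∑ i, a i ≤ d := by omega
    have hbd : ∑ i, b i ≤ d := by omega
    have step1 : y α = M ⟨a, had⟩ ⟨b, hbd⟩ := by
      rw [hMval ⟨a, had⟩ ⟨b, hbd⟩ (hle _ _)]
      exact congrArg y (Subtype.ext hab.symm)
    rw [step1, hfactor, hzp d ⟨a, had⟩ had, hzp d ⟨b, hbd⟩ hbd, ← hab, hpadd]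
  refine ⟨?_, hfin⟩
  ext α β
  rw [Matrix.vecMulVec_apply]
  show M α β = _
  rw [hfactor α β, hzp d α α.2, hzp d β β.2]
  rfl
end

section
/- (Theorem 1, sufficiency.) Let g₁,…,g_m ∈ ℝ[x₁,…,xₙ] with deg(g_i) ≤ 2d, K = {x : g₁(x) ≥ 0,…,g_m(x) ≥ 0}, f ∈ ℝ[x₁,…,xₙ] with deg(f) ≤ 2d, and ε > 0. Suppose y* is a minimizer of the moment relaxation (minimize ⟨f,y⟩ + ε‖y‖ over tms y of degree 2d with y₀ = 1, M_d[y] ⪰ 0, L_{g_i}^{(d)}[y] ⪰ 0 for all i) and that rank M_d[y*] = 1. Then the point u = (y*_{e₁},…,y*_{eₙ}) belongs to K, u is a minimizer of the perturbed problem (minimize f(x) + ε‖[x]_{2d}‖ over x ∈ K), and the optimal values of the two problems are equal (the relaxation is tight). -/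
open MvPolynomial Finset

/-!
Because `M_d[y*]` has rank one and `y*₀ = 1`, its entries factor as `y*_{α+β} = y*_α y*_β`
for `|α|, |β| ≤ d`; splitting every multi-index of degree `≤ 2d` into two halves of degree
`≤ d`, induction on the degree shows that `y*` is the monomial vector `[u]_{2d}`. Then
`L_{g_i}^{(d)}[y*] = g_i(u) [u]_t [u]_tᵀ` forces `g_i(u) ≥ 0`, and for every `x ∈ K` the tms
`[x]_{2d}` is feasible for the relaxation with objective value `f(x) + ε‖[x]_{2d}‖`, which
the minimality of `y*` bounds from below by `f(u) + ε‖[u]_{2d}‖`.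
-/

namespace Matrix

theorem mul_apply_eq_of_rank_le_one {K ι κ : Type*} [Field K] [Fintype κ] {M : Matrix ι κ K}
    (hM : M.rank ≤ 1) (a c : ι) (b e : κ) : M a b * M c e = M a e * M c b := by
  classical
  obtain ⟨v, hv⟩ := finrank_le_one_iff.mp hM
  have hcol : ∀ j, ∃ t : K, ∀ i, M i j = t * (v : ι → K) i := fun j => by
    obtain ⟨t, ht⟩ := hv ⟨M.col j, M.mulVec_single_one j ▸ LinearMap.mem_range_self _ _⟩
    exact ⟨t, fun i => (congrFun (congrArg Subtype.val ht) i).symm⟩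
  obtain ⟨s, hs⟩ := hcol b
  obtain ⟨t, ht⟩ := hcol e
  rw [hs, hs, ht, ht]
  ring

end Matrix

namespace MIdx

variable {n d : ℕ}

instance : Zero (MIdx n d) := ⟨⟨0, by simp⟩⟩

@[simp]
theorem coe_zero : (0 : MIdx n d).1 = 0 := rfl

theorem degree_val_le (α : MIdx n d) : α.1.degree ≤ d := by
  simpa [Finsupp.degree_eq_sum] using α.2

def ofDegreeLE (a : Fin n →₀ ℕ) (h : a.degree ≤ d) : MIdx n d :=
  ⟨a, by rwa [← Finsupp.degree_eq_sum]⟩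

end MIdx

section MomentMatrix

variable {n d : ℕ}

theorem monVec_apply_of_add_eq {k l m : ℕ} (x : Fin n → ℝ) {γ : MIdx n k} {α : MIdx n l}
    {β : MIdx n m} (h : α.1 + β.1 = γ.1) : monVec k x γ = monVec l x α * monVec m x β := by
  simp only [monVec, ← h, Finsupp.add_apply, pow_add, prod_mul_distrib]

@[simp]
theorem monVec_zero (k : ℕ) (x : Fin n → ℝ) : monVec k x 0 = 1 := by
  simp [monVec]

theorem momMat_apply_of_add_eq {y : MIdx n (2 * d) → ℝ} {α β : MIdx n d} {γ : MIdx n (2 * d)}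
    (h : α.1 + β.1 = γ.1) : momMat d y α β = y γ :=
  congrArg y (Subtype.ext h)

theorem momMat_apply_eq_mul_of_rank_le_one {y : MIdx n (2 * d) → ℝ} (h0 : y 0 = 1)
    (hrank : (momMat d y).rank ≤ 1) (α β : MIdx n d) :
    momMat d y α β = momMat d y α 0 * momMat d y 0 β := by
  have h00 : momMat d y 0 0 = 1 := (momMat_apply_of_add_eq (add_zero 0)).trans h0
  simpa [h00] using Matrix.mul_apply_eq_of_rank_le_one hrank α 0 β 0

theorem eq_monVec_of_momMat_apply_eq_mul (hd : 1 ≤ d) {y : MIdx n (2 * d) → ℝ} (h0 : y 0 = 1)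
    (hmul : ∀ α β, momMat d y α β = momMat d y α 0 * momMat d y 0 β) (u : Fin n → ℝ)
    (hu : ∀ i, u i = y ⟨Finsupp.single i 1, by simp [Finsupp.single_apply]; omega⟩) :
    y = monVec (2 * d) u := by
  funext γ
  induction hs : γ.1.degree using Nat.strong_induction_on generalizing γ with
  | _ s ih =>
  have hsd : s ≤ 2 * d := hs ▸ γ.degree_val_le
  rcases lt_trichotomy s 1 with hs0 | rfl | hs2
  · have hγ : γ.1 = 0 := (Finsupp.degree_eq_zero_iff _).mp (by omega)
    rw [show γ = 0 from Subtype.ext hγ, h0, monVec_zero]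
  · obtain ⟨i, hi⟩ : γ.1 ∈ Set.range (Finsupp.single · 1) := Finsupp.range_single_one ▸ hs
    calc y γ = u i := by rw [hu]; exact congrArg y (Subtype.ext hi.symm)
      _ = monVec (2 * d) u γ := by simp [monVec, ← hi, Finsupp.single_apply]
  · -- split `γ` into multi-indices of degrees `⌊s/2⌋` and `⌈s/2⌉`, both `≤ d` and `< s`
    obtain ⟨a, hle, ha⟩ := Finsupp.exists_le_degree_eq γ.1 (s / 2) (by omega)
    have hab : a + (γ.1 - a) = γ.1 := add_tsub_cancel_of_le hle
    have hb : (γ.1 - a).degree = s - s / 2 := by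
      have := congrArg Finsupp.degree hab
      rw [map_add] at this
      omega
    let α : MIdx n d := MIdx.ofDegreeLE a (by omega)
    let β : MIdx n d := MIdx.ofDegreeLE (γ.1 - a) (by omega)
    let α' : MIdx n (2 * d) := MIdx.ofDegreeLE a (by omega)
    let β' : MIdx n (2 * d) := MIdx.ofDegreeLE (γ.1 - a) (by omega)
    calc y γ = momMat d y α β := (momMat_apply_of_add_eq hab).symm
      _ = y α' * y β' := by
        rw [hmul, momMat_apply_of_add_eq (γ := α') (add_zero a),
          momMat_apply_of_add_eq (γ := β') (zero_add _)]
      _ = monVec (2 * d) u α' * monVec (2 * d) u β' := by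
        rw [ih _ (by omega) α' ha, ih _ (by omega) β' hb]
      _ = monVec (2 * d) u γ := (monVec_apply_of_add_eq u hab).symm

end MomentMatrix

section PointEvaluation

open Matrix

variable {n d : ℕ}

theorem momMat_monVec (x : Fin n → ℝ) :
    momMat d (monVec (2 * d) x) = vecMulVec (monVec d x) (monVec d x) := by
  ext α β
  exact monVec_apply_of_add_eq x (γ := ⟨α.1 + β.1, _⟩) rfl

theorem locMat_monVec (p : MvPolynomial (Fin n) ℝ) (hp : p.totalDegree ≤ 2 * d)
    (x : Fin n → ℝ) :
    locMat d p hp (monVec (2 * d) x) =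
      eval x p • vecMulVec (monVec _ x) (monVec _ x) := by
  ext α β
  simp only [locMat, monVec, Matrix.smul_apply, vecMulVec_apply, smul_eq_mul, eval_eq', sum_mul,
    Finsupp.add_apply, pow_add, prod_mul_distrib]
  exact (sum_attach p.support (fun γ => p.coeff γ * ((∏ i, x i ^ α.1 i) * (∏ i, x i ^ β.1 i) *
    ∏ i, x i ^ γ i))).trans (sum_congr rfl fun γ _ => by ring)

theorem momMat_monVec_posSemidef (x : Fin n → ℝ) : (momMat d (monVec (2 * d) x)).PosSemidef := by
  simpa [momMat_monVec] using posSemidef_vecMulVec_self_star (monVec d x)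

theorem locMat_monVec_posSemidef {p : MvPolynomial (Fin n) ℝ} (hp : p.totalDegree ≤ 2 * d)
    {x : Fin n → ℝ} (hx : 0 ≤ eval x p) : (locMat d p hp (monVec (2 * d) x)).PosSemidef := by
  rw [locMat_monVec]
  have h := posSemidef_vecMulVec_self_star (monVec (d - (p.totalDegree + 1) / 2) x)
  simp only [star_trivial] at h
  exact h.smul hx

theorem eval_nonneg_of_locMat_monVec_posSemidef {p : MvPolynomial (Fin n) ℝ}
    (hp : p.totalDegree ≤ 2 * d) {x : Fin n → ℝ}
    (h : (locMat d p hp (monVec (2 * d) x)).PosSemidef) : 0 ≤ eval x p := by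
  have h00 := (locMat_monVec p hp x ▸ h).diag_nonneg (i := 0)
  simpa [vecMulVec_apply] using h00

theorem riesz_monVec {f : MvPolynomial (Fin n) ℝ} (hf : f.totalDegree ≤ 2 * d)
    (x : Fin n → ℝ) : riesz d f (monVec (2 * d) x) = eval x f := by
  have hsupp : f.support ⊆ univ.map (Function.Embedding.subtype _) := fun γ hγ =>
    mem_map.mpr ⟨MIdx.ofDegreeLE γ ((le_totalDegree hγ).trans hf), mem_univ _, rfl⟩
  rw [eval_eq', sum_subset hsupp fun γ _ hγ => by rw [notMem_support_iff.mp hγ, zero_mul],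
    sum_map]
  rfl

end PointEvaluation

/-- (Theorem 1, sufficiency.) Suppose `y*` is a minimizer of the moment
relaxation (minimize `⟨f,y⟩ + ε‖y‖` over tms `y` of degree `2d` with `y₀ = 1`,
`M_d[y] ⪰ 0`, `L_{g_i}^{(d)}[y] ⪰ 0` for all `i`) and `rank M_d[y*] = 1`. Then
`u = (y*_{e₁},…,y*_{eₙ})` belongs to `K`, `u` minimizes the perturbed problem
(minimize `f(x) + ε‖[x]_{2d}‖` over `x ∈ K`), and the two optimal values coincide. -/
theorem stmt11 (n m d : ℕ) (hd : 1 ≤ d) (g : Fin m → MvPolynomial (Fin n) ℝ)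
    (hg : ∀ i, (g i).totalDegree ≤ 2 * d)
    (K : Set (Fin n → ℝ)) (hK : K = {x | ∀ i, 0 ≤ MvPolynomial.eval x (g i)})
    (f : MvPolynomial (Fin n) ℝ) (hf : f.totalDegree ≤ 2 * d)
    (ε : ℝ)
    (ystar : MIdx n (2 * d) → ℝ)
    (hy0 : ystar ⟨0, by simp⟩ = 1)
    (hy2 : ∀ i, (locMat d (g i) (hg i) ystar).PosSemidef)
    (hymin : ∀ y : MIdx n (2 * d) → ℝ,
      y ⟨0, by simp⟩ = 1 → (momMat d y).PosSemidef →
      (∀ i, (locMat d (g i) (hg i) y).PosSemidef) →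
      riesz d f ystar + ε * tmsNorm ystar ≤ riesz d f y + ε * tmsNorm y)
    (hrank : (momMat d ystar).rank = 1)
    (u : Fin n → ℝ)
    (hu : ∀ i : Fin n,
      u i = ystar ⟨Finsupp.single i 1, by simp [Finsupp.single_apply]; omega⟩) :
    u ∈ K ∧
    (∀ x ∈ K, MvPolynomial.eval u f + ε * tmsNorm (monVec (2 * d) u) ≤
      MvPolynomial.eval x f + ε * tmsNorm (monVec (2 * d) x)) ∧
    MvPolynomial.eval u f + ε * tmsNorm (monVec (2 * d) u) =
      riesz d f ystar + ε * tmsNorm ystar := by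
  have hy : ystar = monVec (2 * d) u :=
    eq_monVec_of_momMat_apply_eq_mul hd hy0 (momMat_apply_eq_mul_of_rank_le_one hy0 hrank.le) u hu
  subst hy
  subst hK
  refine ⟨fun i => eval_nonneg_of_locMat_monVec_posSemidef (hg i) (hy2 i),
    fun x hxK => ?_, by rw [riesz_monVec hf]⟩
  simpa only [riesz_monVec hf] using hymin (monVec (2 * d) x) (monVec_zero _ x)
    (momMat_monVec_posSemidef x) fun i => locMat_monVec_posSemidef (hg i) (hxK i)
end

section
/- Let K ⊆ ℝⁿ be closed, let f : ℝⁿ → ℝ be continuous, and suppose the set S of minimizers of f over K is nonempty. Let C ⊆ ℝⁿ be compact with S ⊆ C, and let (f_N) be a sequence of functions ℝⁿ → ℝ converging uniformly to f on C. Suppose that for all sufficiently large N the set S_N of minimizers of f_N over K is nonempty and S_N ⊆ C. Then the deviation of S_N from S tends to zero: sup_{x ∈ S_N} inf_{y ∈ S} ‖x − y‖ → 0 as N → ∞. -/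
/-- (Convergence of approximate minimizer sets in sample average
approximation, deterministic form.) Let `K ⊆ ℝⁿ` be closed, `f` continuous with nonempty
minimizer set `S` over `K`, `C` compact with `S ⊆ C`, and `f_N → f` uniformly on `C`.
If for all large `N` the minimizer set `S_N` of `f_N` over `K` is nonempty and contained
in `C`, then the deviation of `S_N` from `S` tends to zero:
`sup_{x ∈ S_N} inf_{y ∈ S} ‖x − y‖ → 0`, i.e. for every `ε > 0`, eventually every
`x ∈ S_N` satisfies `inf_{y ∈ S} ‖x − y‖ < ε`. -/
theorem stmt19 (n : ℕ) (K : Set (EuclideanSpace ℝ (Fin n))) (hKclosed : IsClosed K)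
    (f : EuclideanSpace ℝ (Fin n) → ℝ) (hfcont : Continuous f)
    (S : Set (EuclideanSpace ℝ (Fin n)))
    (hS : S = {x | x ∈ K ∧ ∀ z ∈ K, f x ≤ f z}) (hSne : S.Nonempty)
    (C : Set (EuclideanSpace ℝ (Fin n))) (hC : IsCompact C) (hSC : S ⊆ C)
    (fN : ℕ → EuclideanSpace ℝ (Fin n) → ℝ)
    (hunif : TendstoUniformlyOn fN f Filter.atTop C)
    (SN : ℕ → Set (EuclideanSpace ℝ (Fin n)))
    (hSN : ∀ N, SN N = {x | x ∈ K ∧ ∀ z ∈ K, fN N x ≤ fN N z})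
    (hSNC : ∀ᶠ N in Filter.atTop, (SN N).Nonempty ∧ SN N ⊆ C) :
    ∀ ε > (0 : ℝ), ∀ᶠ N in Filter.atTop,
      ∀ x ∈ SN N, ⨅ y : S, ‖x - (y : EuclideanSpace ℝ (Fin n))‖ < ε := by
  intro ε hε
  have key : ∀ x : EuclideanSpace ℝ (Fin n),
      (⨅ y : S, ‖x - (y : EuclideanSpace ℝ (Fin n))‖) = Metric.infDist x S := by
    intro x
    simp only [Metric.infDist_eq_iInf, dist_eq_norm]
  obtain ⟨s0, hs0⟩ := hSne
  have hs0' : s0 ∈ K ∧ ∀ z ∈ K, f s0 ≤ f z := by rw [hS] at hs0; exact hs0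
  set m := f s0 with hm
  set T := (C ∩ K) ∩ {x | ε ≤ Metric.infDist x S} with hT
  have hTclosed : IsClosed T :=
    ((hC.isClosed.inter hKclosed).inter
      (isClosed_le continuous_const (Metric.continuous_infDist_pt S)))
  have hTcompact : IsCompact T :=
    hC.of_isClosed_subset hTclosed (fun x hx => hx.1.1)
  by_cases hTne : T.Nonempty
  · obtain ⟨t, ht, hmin⟩ := hTcompact.exists_isMinOn hTne hfcont.continuousOn
    have htK : t ∈ K := ht.1.2
    have hmt : m < f t := by
      by_contra hle
      push_neg at hle
      have htS : t ∈ S := by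
        rw [hS]; exact ⟨htK, fun z hz => le_trans hle (hs0'.2 z hz)⟩
      have h0 : Metric.infDist t S = 0 := Metric.infDist_zero_of_mem htS
      have h1 : ε ≤ Metric.infDist t S := ht.2
      linarith
    set δ := f t - m with hδdef
    have hδ : 0 < δ := sub_pos.2 hmt
    have hU := Metric.tendstoUniformlyOn_iff.1 hunif (δ/3) (by positivity)
    filter_upwards [hU, hSNC] with N hN hNC x hx
    rw [key]
    by_contra h
    push_neg at h
    have hx' : x ∈ K ∧ ∀ z ∈ K, fN N x ≤ fN N z := by rw [hSN N] at hx; exact hx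
    have hxC : x ∈ C := hNC.2 hx
    have hxT : x ∈ T := ⟨⟨hxC, hx'.1⟩, h⟩
    have h1 : |f x - fN N x| < δ/3 := by
      have := hN x hxC; rw [Real.dist_eq] at this; exact this
    have h2 : fN N x ≤ fN N s0 := hx'.2 s0 hs0'.1
    have h3 : |f s0 - fN N s0| < δ/3 := by
      have := hN s0 (hSC hs0); rw [Real.dist_eq] at this; exact this
    have h4 : f t ≤ f x := hmin hxT
    have h1' := abs_lt.1 h1
    have h3' := abs_lt.1 h3
    simp only [hδdef] at *
    linarith
  · filter_upwards [hSNC] with N hNC x hx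
    rw [key]
    by_contra h
    push_neg at h
    have hx' : x ∈ K ∧ ∀ z ∈ K, fN N x ≤ fN N z := by rw [hSN N] at hx; exact hx
    exact hTne ⟨x, ⟨⟨hNC.2 hx, hx'.1⟩, h⟩⟩
end
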